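/- The 3×3 matrix B with diagonal entries 2 and off-diagonal entries 1 satisfies rank_θ(B) = rank_±(B) = 2 < rank(B) = 3. -/

import Mathlib

open Matrix

noncomputable def phaselessRank {n m : ℕ} (A : Matrix (Fin n) (Fin m) ℝ) : ℕ :=
  sInf {r | ∃ B : Matrix (Fin n) (Fin m) ℂ,
    (∀ i j, ‖B i j‖ = A i j) ∧ B.rank = r}

noncomputable def signlessRank {n m : ℕ} (A : Matrix (Fin n) (Fin m) ℝ) : ℕ :=
  sInf {r | ∃ B : Matrix (Fin n) (Fin m) ℝ,
    (∀ i j, |B i j| = A i j) ∧ B.rank = r}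

def Bmat : Matrix (Fin 3) (Fin 3) ℝ := fun i j => if i = j then 2 else 1

section Aux

variable {K : Type*} [Field K]

/-- Any matrix with entrywise absolute values `Bmat` has rank at least 2. -/
lemma aux_rank_ge_two (f : AbsoluteValue K ℝ) (B : Matrix (Fin 3) (Fin 3) K)
    (h : ∀ i j, f (B i j) = Bmat i j) : 2 ≤ B.rank := by
  have habs : f (B 0 0) = 2 ∧ f (B 0 1) = 1 ∧ f (B 1 0) = 1 ∧ f (B 1 1) = 2 := by
    refine ⟨?_, ?_, ?_, ?_⟩ <;> simp [h, Bmat]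
  obtain ⟨h00, h01, h10, h11⟩ := habs
  set c0 : Fin 3 → K := fun i => B i 0 with hc0
  set c1 : Fin 3 → K := fun i => B i 1 with hc1
  have hindep : LinearIndependent K ![c0, c1] := by
    rw [LinearIndependent.pair_iff]
    intro s t hst
    have e0 : s * B 0 0 + t * B 0 1 = 0 := by
      have := congrFun hst 0; simpa [c0, c1] using this
    have e1 : s * B 1 0 + t * B 1 1 = 0 := by
      have := congrFun hst 1; simpa [c0, c1] using this
    have f0 : f s * 2 = f t * 1 := by
      have : s * B 0 0 = -(t * B 0 1) := by linear_combination e0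
      have := congrArg f this
      rwa [map_neg_eq_map, _root_.map_mul, _root_.map_mul, h00, h01] at this
    have f1 : f s * 1 = f t * 2 := by
      have : s * B 1 0 = -(t * B 1 1) := by linear_combination e1
      have := congrArg f this
      rwa [map_neg_eq_map, _root_.map_mul, _root_.map_mul, h10, h11] at this
    have hfs : f s = 0 := by nlinarith [f.nonneg s, f.nonneg t]
    have hft : f t = 0 := by nlinarith [f.nonneg t]
    exact ⟨f.eq_zero.mp hfs, f.eq_zero.mp hft⟩
  have hmem : ∀ j : Fin 3, (fun i => B i j) ∈ LinearMap.range B.mulVecLin := by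
    intro j
    refine ⟨Pi.single j 1, ?_⟩
    ext i
    simp [mulVecLin_apply, mulVec_single]
  have hle : Submodule.span K (Set.range ![c0, c1]) ≤ LinearMap.range B.mulVecLin := by
    rw [Submodule.span_le]
    rintro x ⟨i, rfl⟩
    fin_cases i
    · exact hmem 0
    · exact hmem 1
  calc (2 : ℕ) = Module.finrank K (Submodule.span K (Set.range ![c0, c1])) := by
        rw [finrank_span_eq_card hindep]; simp
    _ ≤ Module.finrank K (LinearMap.range B.mulVecLin) := Submodule.finrank_mono hle
    _ = B.rank := rfl

end Aux

/-- A real witness of rank 2 with entrywise absolute values `Bmat`. -/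
def Cmat : Matrix (Fin 3) (Fin 3) ℝ := !![2, 1, 1; 1, 2, -1; 1, -1, 2]

lemma Cmat_abs : ∀ i j, |Cmat i j| = Bmat i j := by
  intro i j
  fin_cases i <;> fin_cases j <;> norm_num [Cmat, Bmat, Fin.ext_iff]

lemma Cmat_factor :
    Cmat = (!![(1:ℝ), 1; 1, 0; 0, 1] : Matrix (Fin 3) (Fin 2) ℝ) *
      (!![(1:ℝ), 2, -1; 1, -1, 2] : Matrix (Fin 2) (Fin 3) ℝ) := by
  ext i j
  fin_cases i <;> fin_cases j <;>
    norm_num [Cmat, Matrix.mul_apply, Fin.sum_univ_succ]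

lemma Cmat_rank_le : Cmat.rank ≤ 2 := by
  rw [Cmat_factor]
  exact (Matrix.rank_mul_le_left _ _).trans (Matrix.rank_le_width _)

lemma Cmat_rank : Cmat.rank = 2 :=
  le_antisymm Cmat_rank_le (aux_rank_ge_two (AbsoluteValue.abs) Cmat Cmat_abs)

/-- Complex version of the witness. -/
def CmatC : Matrix (Fin 3) (Fin 3) ℂ := fun i j => (Cmat i j : ℂ)

lemma CmatC_abs : ∀ i j, ‖CmatC i j‖ = Bmat i j := by
  intro i j
  rw [show CmatC i j = (Cmat i j : ℂ) from rfl, Complex.norm_real, Real.norm_eq_abs]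
  exact Cmat_abs i j

lemma CmatC_factor :
    CmatC = (!![(1:ℂ), 1; 1, 0; 0, 1] : Matrix (Fin 3) (Fin 2) ℂ) *
      (!![(1:ℂ), 2, -1; 1, -1, 2] : Matrix (Fin 2) (Fin 3) ℂ) := by
  ext i j
  fin_cases i <;> fin_cases j <;>
    norm_num [CmatC, Cmat, Matrix.mul_apply, Fin.sum_univ_succ]

lemma CmatC_rank : CmatC.rank = 2 := by
  refine le_antisymm ?_ (aux_rank_ge_two (IsAbsoluteValue.toAbsoluteValue (norm : ℂ → ℝ)) CmatC CmatC_abs)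
  rw [CmatC_factor]
  exact (Matrix.rank_mul_le_left _ _).trans (Matrix.rank_le_width _)

lemma Bmat_rank : Bmat.rank = 3 := by
  have hdet : Bmat.det = 4 := by
    rw [Matrix.det_fin_three]
    norm_num [Bmat, Fin.ext_iff]
  have hu : IsUnit Bmat := by
    rw [Matrix.isUnit_iff_isUnit_det, hdet]
    norm_num
  rw [Matrix.rank_of_isUnit Bmat hu]
  simp

theorem stmt_6 :
    phaselessRank Bmat = 2 ∧ signlessRank Bmat = 2 ∧ Bmat.rank = 3 := by
  refine ⟨?_, ?_, Bmat_rank⟩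
  · have hmem : 2 ∈ {r | ∃ B : Matrix (Fin 3) (Fin 3) ℂ,
        (∀ i j, ‖B i j‖ = Bmat i j) ∧ B.rank = r} :=
      ⟨CmatC, CmatC_abs, CmatC_rank⟩
    refine le_antisymm (Nat.sInf_le hmem) (le_csInf ⟨2, hmem⟩ ?_)
    rintro r ⟨B, hB, rfl⟩
    exact aux_rank_ge_two (IsAbsoluteValue.toAbsoluteValue (norm : ℂ → ℝ)) B hB
  · have hmem : 2 ∈ {r | ∃ B : Matrix (Fin 3) (Fin 3) ℝ,
        (∀ i j, |B i j| = Bmat i j) ∧ B.rank = r} :=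
      ⟨Cmat, Cmat_abs, Cmat_rank⟩
    refine le_antisymm (Nat.sInf_le hmem) (le_csInf ⟨2, hmem⟩ ?_)
    rintro r ⟨B, hB, rfl⟩
    exact aux_rank_ge_two AbsoluteValue.abs B hB
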